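/- arXiv:2502.03016 — 4 statements merged into one kernel-verified Lean document; each statement's English description precedes it below -/
import Mathlib

section
/- Fix w ∈ ℝ^n, b ∈ ℝ, x ∈ ℝ^n and bounds L, U ∈ ℝ with L ≤ w·x + b ≤ U. Then a real number y satisfies, for some z ∈ {0,1}, the big-M constraints y ≥ 0, y ≥ w·x + b, y ≤ w·x + b − L·(1 − z), and y ≤ U·z, if and only if y = max(0, w·x + b). -/
/-! With `z = 0` the constraints force `y = 0` and `a ≤ 0`; with `z = 1` they force `y = a` and
`0 ≤ a`. The bounds `L ≤ a ≤ U` are exactly what makes the remaining constraint slack, so the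
two branches together describe the graph of `max 0`. -/

section BigM

variable {α : Type*} [Ring α]

def BigMReLU [LE α] (L U a y z : α) : Prop :=
  0 ≤ y ∧ a ≤ y ∧ y ≤ a - L * (1 - z) ∧ y ≤ U * z

theorem bigMReLU_zero_iff [PartialOrder α] [IsOrderedAddMonoid α] {L U a y : α}
    (hL : L ≤ a) : BigMReLU L U a y 0 ↔ y = 0 ∧ a ≤ 0 := by
  simp only [BigMReLU, sub_zero, mul_one, mul_zero]
  constructor
  · rintro ⟨hy₀, hay, -, hy₀'⟩
    obtain rfl : y = 0 := le_antisymm hy₀' hy₀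
    exact ⟨rfl, hay⟩
  · rintro ⟨rfl, ha⟩
    exact ⟨le_rfl, ha, sub_nonneg.2 hL, le_rfl⟩

theorem bigMReLU_one_iff [PartialOrder α] {L U a y : α} (hU : a ≤ U) :
    BigMReLU L U a y 1 ↔ y = a ∧ 0 ≤ a := by
  simp only [BigMReLU, sub_self, mul_zero, sub_zero, mul_one]
  constructor
  · rintro ⟨hy₀, hay, hya, -⟩
    obtain rfl : y = a := le_antisymm hya hay
    exact ⟨rfl, hy₀⟩
  · rintro ⟨rfl, ha⟩
    exact ⟨ha, le_rfl, le_rfl, hU⟩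

theorem exists_bigMReLU_iff [LinearOrder α] [IsOrderedAddMonoid α] {L U a y : α}
    (hL : L ≤ a) (hU : a ≤ U) :
    (∃ z : α, (z = 0 ∨ z = 1) ∧ BigMReLU L U a y z) ↔ y = max 0 a := by
  simp only [or_and_right, exists_or, exists_eq_left, bigMReLU_zero_iff hL, bigMReLU_one_iff hU,
    eq_comm (a := y), max_eq_iff]

end BigM

/-- Big-M formulation of a single ReLU neuron is exact:
given valid pre-activation bounds `L ≤ w·x + b ≤ U`, a real `y` satisfies the big-M
constraints for some binary `z` iff `y = max 0 (w·x + b)`. -/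
theorem bigM_relu_exact (n : ℕ) (w x : Fin n → ℝ) (b L U : ℝ)
    (hL : L ≤ (∑ i, w i * x i) + b) (hU : (∑ i, w i * x i) + b ≤ U) (y : ℝ) :
    (∃ z : ℝ, (z = 0 ∨ z = 1) ∧
        0 ≤ y ∧
        (∑ i, w i * x i) + b ≤ y ∧
        y ≤ (∑ i, w i * x i) + b - L * (1 - z) ∧
        y ≤ U * z) ↔
      y = max 0 ((∑ i, w i * x i) + b) :=
  exists_bigMReLU_iff hL hU
end

section
/- Fix w ∈ ℝ^n, b ∈ ℝ, x ∈ ℝ^n, a clipping threshold M ≥ 0, and bounds L, U ∈ ℝ with L ≤ w·x + b ≤ U. Write t = w·x + b. Then a real number y satisfies, for some z₁, z₂ ∈ {0,1} with z₁ ≥ z₂, the constraints y ≥ 0, y ≤ M·z₁, y ≤ U·z₁, y ≤ t − L·(1 − z₁), y ≥ M·z₂, and y ≥ t − (U − M)·z₂, if and only if y = max(0, min(M, t)). -/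
/-!
With `z₁, z₂` binary and `z₂ ≤ z₁` only three patterns remain, one per linear piece of the
clipped ReLU: `(0,0)` forces `y = 0` and `t ≤ 0`, `(1,0)` forces `y = t` and `0 ≤ t ≤ M`, and
`(1,1)` forces `y = M` and `M ≤ t`. The bounds `L ≤ t ≤ U` are exactly what makes the constraints
that the active pattern switches off (`y ≤ t - L` and `t - (U - M) ≤ y`) hold automatically.
-/

section BigM

variable {K : Type*} [Field K] [LinearOrder K] [IsStrictOrderedRing K]

def BigMClippedReLU (M L U t y z₁ z₂ : K) : Prop :=
  0 ≤ y ∧ y ≤ M * z₁ ∧ y ≤ U * z₁ ∧ y ≤ t - L * (1 - z₁) ∧ M * z₂ ≤ y ∧ t - (U - M) * z₂ ≤ y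

variable {M L U t y : K}

theorem bigMClippedReLU_zero_zero_iff (hL : L ≤ t) :
    BigMClippedReLU M L U t y 0 0 ↔ y = 0 ∧ t ≤ 0 := by
  simp only [BigMClippedReLU]
  constructor
  · rintro ⟨hy₀, hyM, -, -, -, hty⟩
    exact ⟨by linarith, by linarith⟩
  · rintro ⟨rfl, ht⟩
    refine ⟨?_, ?_, ?_, ?_, ?_, ?_⟩ <;> linarith

theorem bigMClippedReLU_one_zero_iff (hU : t ≤ U) :
    BigMClippedReLU M L U t y 1 0 ↔ y = t ∧ 0 ≤ t ∧ t ≤ M := by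
  simp only [BigMClippedReLU]
  constructor
  · rintro ⟨hy₀, hyM, -, hyt, -, hty⟩
    exact ⟨by linarith, by linarith, by linarith⟩
  · rintro ⟨rfl, ht₀, htM⟩
    refine ⟨?_, ?_, ?_, ?_, ?_, ?_⟩ <;> linarith

theorem bigMClippedReLU_one_one_iff (hM : 0 ≤ M) (hU : t ≤ U) :
    BigMClippedReLU M L U t y 1 1 ↔ y = M ∧ M ≤ t := by
  simp only [BigMClippedReLU]
  constructor
  · rintro ⟨-, hyM, -, hyt, hMy, -⟩
    exact ⟨by linarith, by linarith⟩
  · rintro ⟨rfl, hMt⟩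
    refine ⟨?_, ?_, ?_, ?_, ?_, ?_⟩ <;> linarith

theorem exists_binary_bigMClippedReLU_iff (hM : 0 ≤ M) (hL : L ≤ t) (hU : t ≤ U) :
    (∃ z₁ z₂ : K, (z₁ = 0 ∨ z₁ = 1) ∧ (z₂ = 0 ∨ z₂ = 1) ∧ z₂ ≤ z₁ ∧
        BigMClippedReLU M L U t y z₁ z₂) ↔
      (y = 0 ∧ t ≤ 0) ∨ (y = t ∧ 0 ≤ t ∧ t ≤ M) ∨ (y = M ∧ M ≤ t) := by
  rw [← bigMClippedReLU_zero_zero_iff hL, ← bigMClippedReLU_one_zero_iff hU,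
    ← bigMClippedReLU_one_one_iff hM hU]
  constructor
  · rintro ⟨z₁, z₂, rfl | rfl, rfl | rfl, hz, h⟩
    · exact .inl h
    · exact absurd hz (by norm_num)
    · exact .inr (.inl h)
    · exact .inr (.inr h)
  · rintro (h | h | h)
    · exact ⟨0, 0, .inl rfl, .inl rfl, le_rfl, h⟩
    · exact ⟨1, 0, .inr rfl, .inl rfl, zero_le_one, h⟩
    · exact ⟨1, 1, .inr rfl, .inr rfl, le_rfl, h⟩

end BigM

theorem eq_max_zero_min_iff {K : Type*} [LinearOrder K] [Zero K] {M t y : K} (hM : 0 ≤ M) :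
    y = max 0 (min M t) ↔ (y = 0 ∧ t ≤ 0) ∨ (y = t ∧ 0 ≤ t ∧ t ≤ M) ∨ (y = M ∧ M ≤ t) := by
  rcases le_total t 0 with ht₀ | ht₀
  · rw [max_eq_left (min_le_of_right_le ht₀)]
    grind
  rcases le_total t M with htM | htM
  · rw [min_eq_right htM, max_eq_right ht₀]
    grind
  · rw [min_eq_left htM, max_eq_right hM]
    grind

/-- Big-M formulation of a single clipped-ReLU neuron is exact:
given a clipping threshold `M ≥ 0` and valid pre-activation bounds `L ≤ w·x + b ≤ U`,
a real `y` satisfies the big-M constraints for some binaries `z₁ ≥ z₂`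
iff `y = max 0 (min M (w·x + b))`. -/
theorem bigM_clipped_relu_exact (n : ℕ) (w x : Fin n → ℝ) (b M L U : ℝ) (hM : 0 ≤ M)
    (hL : L ≤ (∑ i, w i * x i) + b) (hU : (∑ i, w i * x i) + b ≤ U) (y : ℝ) :
    (∃ z₁ z₂ : ℝ, (z₁ = 0 ∨ z₁ = 1) ∧ (z₂ = 0 ∨ z₂ = 1) ∧ z₂ ≤ z₁ ∧
        0 ≤ y ∧
        y ≤ M * z₁ ∧
        y ≤ U * z₁ ∧
        y ≤ (∑ i, w i * x i) + b - L * (1 - z₁) ∧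
        M * z₂ ≤ y ∧
        (∑ i, w i * x i) + b - (U - M) * z₂ ≤ y) ↔
      y = max 0 (min M ((∑ i, w i * x i) + b)) :=
  (exists_binary_bigMClippedReLU_iff hM hL hU).trans (eq_max_zero_min_iff hM).symm
end

section
/- Let h be a feed-forward ReLU network with J ≥ 3 layers and let X ⊆ ℝ^{n_x}. Suppose layer j (with 1 ≤ j ≤ J−2) is stably active on X, i.e., for every x ∈ X the pre-activation satisfies (W^(j) x^(j−1) + b^(j))_i ≥ 0 for all i = 1,…,n_j. Then for every x ∈ X, ReLU(W^(j+1)·ReLU(W^(j) x^(j−1) + b^(j)) + b^(j+1)) = ReLU(W' x^(j−1) + b'), where W' = W^(j+1)·W^(j) and b' = W^(j+1)·b^(j) + b^(j+1); consequently the network obtained by merging layers j and j+1 into the single layer (W', b') computes the same function as h on X. -/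
/-! Since ReLU is the identity on nonnegative numbers, a stably active layer acts as an affine
map on `X`, and two consecutive affine maps compose to the affine map with weights
`W^(j+1) W^(j)` and bias `W^(j+1) b^(j) + b^(j+1)`. The merged network therefore reproduces
the layer outputs of the original one: unchanged below layer `j`, and shifted by one index
from the merged layer on. -/

/-- The affine map `x ↦ W x + b` of a layer with input width `m`
(vectors encoded as functions `ℕ → ℝ`, only the first `m` coordinates are read). -/
noncomputable def affineLayer (m : ℕ) (W : ℕ → ℕ → ℝ) (b : ℕ → ℝ) (x : ℕ → ℝ) : ℕ → ℝ :=
  fun i => (∑ k ∈ Finset.range m, W i k * x k) + b i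

/-- Layer outputs of a feed-forward ReLU network: `x^(0) = x` and
`x^(j) = ReLU(W^(j) x^(j-1) + b^(j))` componentwise (0-based weight indices:
the weights of paper-layer `j` are `W (j-1)`, `b (j-1)`). -/
noncomputable def layerOut (n : ℕ → ℕ) (W : ℕ → ℕ → ℕ → ℝ) (b : ℕ → ℕ → ℝ)
    (x : ℕ → ℝ) : ℕ → ℕ → ℝ
  | 0 => x
  | j + 1 => fun i => max 0 (affineLayer (n j) (W j) (b j) (layerOut n W b x j) i)

/-- Output of a feed-forward ReLU network with `J` layers: the last layer is affine,
`h(x) = W^(J) x^(J-1) + b^(J)`. -/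
noncomputable def netOut (J : ℕ) (n : ℕ → ℕ) (W : ℕ → ℕ → ℕ → ℝ) (b : ℕ → ℕ → ℝ)
    (x : ℕ → ℝ) : ℕ → ℝ :=
  affineLayer (n (J - 1)) (W (J - 1)) (b (J - 1)) (layerOut n W b x (J - 1))

open Finset

noncomputable def mergedWeight (p : ℕ) (V U : ℕ → ℕ → ℝ) : ℕ → ℕ → ℝ :=
  fun i k => ∑ l ∈ range p, V i l * U l k

noncomputable def mergedBias (p : ℕ) (V : ℕ → ℕ → ℝ) (c d : ℕ → ℝ) : ℕ → ℝ :=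
  fun i => (∑ l ∈ range p, V i l * c l) + d i

section Affine

variable {m p : ℕ} {U V : ℕ → ℕ → ℝ} {c d : ℕ → ℝ}

theorem affineLayer_congr_right {y y' : ℕ → ℝ} (h : ∀ k < m, y k = y' k) :
    affineLayer m U c y = affineLayer m U c y' := by
  funext i
  simp only [affineLayer]
  congr 1
  exact sum_congr rfl fun k hk => by rw [h k (mem_range.mp hk)]

theorem affineLayer_affineLayer (y : ℕ → ℝ) :
    affineLayer p V d (affineLayer m U c y)
      = affineLayer m (mergedWeight p V U) (mergedBias p V c d) y := by
  funext i
  simp only [affineLayer, mergedWeight, mergedBias, mul_add, mul_sum, sum_mul,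
    sum_add_distrib, mul_assoc]
  rw [sum_comm]
  ring

theorem affineLayer_max_zero_affineLayer_of_nonneg {y : ℕ → ℝ}
    (h : ∀ l < p, 0 ≤ affineLayer m U c y l) :
    affineLayer p V d (fun l => max 0 (affineLayer m U c y l))
      = affineLayer m (mergedWeight p V U) (mergedBias p V c d) y := by
  rw [← affineLayer_affineLayer]
  exact affineLayer_congr_right fun l hl => max_eq_right (h l hl)

end Affine

section Network

variable {n n' : ℕ → ℕ} {W W' : ℕ → ℕ → ℕ → ℝ} {b b' : ℕ → ℕ → ℝ} {x : ℕ → ℝ}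

theorem layerOut_succ (k : ℕ) :
    layerOut n W b x (k + 1)
      = fun i => max 0 (affineLayer (n k) (W k) (b k) (layerOut n W b x k) i) :=
  rfl

theorem layerOut_add_eq_of_eq {s t d : ℕ} (h : layerOut n' W' b' x s = layerOut n W b x t)
    (hparams : ∀ k < d, n' (s + k) = n (t + k) ∧ W' (s + k) = W (t + k) ∧ b' (s + k) = b (t + k)) :
    layerOut n' W' b' x (s + d) = layerOut n W b x (t + d) := by
  induction d with
  | zero => exact h
  | succ d ih =>
    obtain ⟨hn, hW, hb⟩ := hparams d d.lt_succ_self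
    rw [← add_assoc, ← add_assoc, layerOut_succ, layerOut_succ, hn, hW, hb,
      ih fun k hk => hparams k (hk.trans d.lt_succ_self)]

theorem layerOut_merge_of_stablyActive {j : ℕ}
    (hlow : ∀ k < j, n' k = n k ∧ W' k = W k ∧ b' k = b k)
    (hn : n' j = n j) (hW : W' j = mergedWeight (n (j + 1)) (W (j + 1)) (W j))
    (hb : b' j = mergedBias (n (j + 1)) (W (j + 1)) (b j) (b (j + 1)))
    (hstable : ∀ i < n (j + 1), 0 ≤ affineLayer (n j) (W j) (b j) (layerOut n W b x j) i) :
    layerOut n' W' b' x (j + 1) = layerOut n W b x (j + 2) := by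
  have hprefix : layerOut n' W' b' x j = layerOut n W b x j := by
    simpa using layerOut_add_eq_of_eq (d := j)
      (show layerOut n' W' b' x 0 = layerOut n W b x 0 from rfl) (by simpa using hlow)
  rw [layerOut_succ, layerOut_succ, layerOut_succ, hn, hW, hb, hprefix,
    ← affineLayer_max_zero_affineLayer_of_nonneg hstable]

theorem netOut_merge_of_stablyActive {J j : ℕ} (hjJ : j + 3 ≤ J)
    (hlow : ∀ k < j, n' k = n k ∧ W' k = W k ∧ b' k = b k)
    (hn : n' j = n j) (hW : W' j = mergedWeight (n (j + 1)) (W (j + 1)) (W j))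
    (hb : b' j = mergedBias (n (j + 1)) (W (j + 1)) (b j) (b (j + 1)))
    (hhigh : ∀ k, j < k → n' k = n (k + 1) ∧ W' k = W (k + 1) ∧ b' k = b (k + 1))
    (hstable : ∀ i < n (j + 1), 0 ≤ affineLayer (n j) (W j) (b j) (layerOut n W b x j) i) :
    netOut (J - 1) n' W' b' x = netOut J n W b x := by
  obtain ⟨d, rfl⟩ : ∃ d, J = j + 1 + d + 2 := ⟨J - j - 3, by omega⟩
  have hshift (k : ℕ) : n' (j + 1 + k) = n (j + 2 + k) ∧ W' (j + 1 + k) = W (j + 2 + k) ∧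
      b' (j + 1 + k) = b (j + 2 + k) := by
    simpa only [Nat.add_right_comm (j + 1) k 1] using hhigh (j + 1 + k) (by omega)
  have hsuffix : layerOut n' W' b' x (j + 1 + d) = layerOut n W b x (j + 2 + d) :=
    layerOut_add_eq_of_eq (layerOut_merge_of_stablyActive hlow hn hW hb hstable)
      fun k _ => hshift k
  obtain ⟨hn', hW', hb'⟩ := hshift d
  rw [netOut, netOut, show j + 1 + d + 2 - 1 = j + 2 + d by omega,
    show j + 2 + d - 1 = j + 1 + d by omega, hn', hW', hb', hsuffix]

end Network

theorem merge_stably_active_layer_general (J : ℕ) (n : ℕ → ℕ)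
    (W : ℕ → ℕ → ℕ → ℝ) (b : ℕ → ℕ → ℝ) (X : Set (ℕ → ℝ))
    (j : ℕ) (hj1 : 1 ≤ j) (hj2 : j ≤ J - 2)
    (hstable : ∀ x ∈ X, ∀ i < n j,
      0 ≤ affineLayer (n (j - 1)) (W (j - 1)) (b (j - 1)) (layerOut n W b x (j - 1)) i) :
    (∀ x ∈ X, ∀ i < n (j + 1),
      max 0 (affineLayer (n j) (W j) (b j)
          (fun k => max 0
            (affineLayer (n (j - 1)) (W (j - 1)) (b (j - 1)) (layerOut n W b x (j - 1)) k)) i)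
        = max 0 (affineLayer (n (j - 1))
            (fun i' k' => ∑ l ∈ Finset.range (n j), W j i' l * W (j - 1) l k')
            (fun i' => (∑ l ∈ Finset.range (n j), W j i' l * b (j - 1) l) + b j i')
            (layerOut n W b x (j - 1)) i)) ∧
    (∀ x ∈ X, ∀ i < n J,
      netOut (J - 1)
          (fun k => if k < j then n k else n (k + 1))
          (fun k =>
            if k < j - 1 then W k
            else if k = j - 1 then
              fun i' k' => ∑ l ∈ Finset.range (n j), W j i' l * W (j - 1) l k'
            else W (k + 1))
          (fun k =>
            if k < j - 1 then b k
            else if k = j - 1 then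
              fun i' => (∑ l ∈ Finset.range (n j), W j i' l * b (j - 1) l) + b j i'
            else b (k + 1))
          x i
        = netOut J n W b x i) := by
  -- switch to the 0-based index of the weights `W j` of the first merged layer
  obtain ⟨j, rfl⟩ : ∃ j', j = j' + 1 := ⟨j - 1, by omega⟩
  simp only [Nat.add_sub_cancel] at hstable ⊢
  refine ⟨fun x hx i _ => ?_, fun x hx i _ => ?_⟩
  · rw [affineLayer_max_zero_affineLayer_of_nonneg (hstable x hx)]
    rfl
  · refine congrFun (netOut_merge_of_stablyActive (by omega) ?low ?width ?weight ?bias ?high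
      (hstable x hx)) i
    case low => exact fun k hk => ⟨if_pos (by omega), if_pos hk, if_pos hk⟩
    case width => exact if_pos j.lt_succ_self
    case weight => exact (if_neg j.lt_irrefl).trans (if_pos rfl)
    case bias => exact (if_neg j.lt_irrefl).trans (if_pos rfl)
    case high =>
      exact fun k hk => ⟨if_neg (by omega), (if_neg (by omega)).trans (if_neg (by omega)),
        (if_neg (by omega)).trans (if_neg (by omega))⟩

/-- Exact compression of a stably active layer: if layer `j` (with `1 ≤ j ≤ J-2`) of a
`J`-layer ReLU network is stably active on `X`, then for every `x ∈ X`,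
`ReLU(W^(j+1)·ReLU(W^(j) x^(j-1) + b^(j)) + b^(j+1)) = ReLU(W' x^(j-1) + b')` with
`W' = W^(j+1)·W^(j)` and `b' = W^(j+1)·b^(j) + b^(j+1)`, and consequently the
`(J-1)`-layer network obtained by merging layers `j` and `j+1` into the single layer
`(W', b')` computes the same function as the original network on `X`. -/
theorem merge_stably_active_layer (J : ℕ) (hJ : 3 ≤ J) (n : ℕ → ℕ)
    (W : ℕ → ℕ → ℕ → ℝ) (b : ℕ → ℕ → ℝ) (X : Set (ℕ → ℝ))
    (j : ℕ) (hj1 : 1 ≤ j) (hj2 : j ≤ J - 2)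
    (hstable : ∀ x ∈ X, ∀ i < n j,
      0 ≤ affineLayer (n (j - 1)) (W (j - 1)) (b (j - 1)) (layerOut n W b x (j - 1)) i) :
    (∀ x ∈ X, ∀ i < n (j + 1),
      max 0 (affineLayer (n j) (W j) (b j)
          (fun k => max 0
            (affineLayer (n (j - 1)) (W (j - 1)) (b (j - 1)) (layerOut n W b x (j - 1)) k)) i)
        = max 0 (affineLayer (n (j - 1))
            (fun i' k' => ∑ l ∈ Finset.range (n j), W j i' l * W (j - 1) l k')
            (fun i' => (∑ l ∈ Finset.range (n j), W j i' l * b (j - 1) l) + b j i')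
            (layerOut n W b x (j - 1)) i)) ∧
    (∀ x ∈ X, ∀ i < n J,
      netOut (J - 1)
          (fun k => if k < j then n k else n (k + 1))
          (fun k =>
            if k < j - 1 then W k
            else if k = j - 1 then
              fun i' k' => ∑ l ∈ Finset.range (n j), W j i' l * W (j - 1) l k'
            else W (k + 1))
          (fun k =>
            if k < j - 1 then b k
            else if k = j - 1 then
              fun i' => (∑ l ∈ Finset.range (n j), W j i' l * b (j - 1) l) + b j i'
            else b (k + 1))
          x i
        = netOut J n W b x i) :=
  merge_stably_active_layer_general J n W b X j hj1 hj2 hstable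
end

section
/- Let L < 0 < U and let t ∈ ℝ with L ≤ t ≤ U. Then {y ∈ ℝ : ∃ z ∈ [0,1], y ≥ 0, y ≥ t, y ≤ t − L·(1 − z), y ≤ U·z} = [max(0, t), U·(t − L)/(U − L)]; that is, for a fixed pre-activation value t, the projection of the LP relaxation of the big-M ReLU formulation onto the output variable is exactly the interval between the true ReLU value max(0, t) and the secant value U·(t − L)/(U − L). -/
/-- Projection of the LP relaxation of the big-M ReLU formulation onto the output
variable: for `L < 0 < U` and a fixed pre-activation value `t ∈ [L, U]`, the set of
feasible outputs `y` is exactly the interval from the true ReLU value `max 0 t` to the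
secant value `U(t − L)/(U − L)`. -/
theorem bigM_relaxation_projection (L U t : ℝ) (hL : L < 0) (hU : 0 < U)
    (hLt : L ≤ t) (htU : t ≤ U) :
    {y : ℝ | ∃ z ∈ Set.Icc (0 : ℝ) 1,
        0 ≤ y ∧ t ≤ y ∧ y ≤ t - L * (1 - z) ∧ y ≤ U * z}
      = Set.Icc (max 0 t) (U * (t - L) / (U - L)) := by
  have hUL : (0:ℝ) < U - L := by linarith
  ext y
  simp only [Set.mem_setOf_eq, Set.mem_Icc]
  constructor
  · rintro ⟨z, ⟨hz0, hz1⟩, hy0, hty, h1, h2⟩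
    refine ⟨max_le hy0 hty, ?_⟩
    rw [le_div_iff₀ hUL]
    nlinarith
  · rintro ⟨hmax, hub⟩
    have hy0 : 0 ≤ y := le_trans (le_max_left _ _) hmax
    have hty : t ≤ y := le_trans (le_max_right _ _) hmax
    have h := (le_div_iff₀ hUL).mp hub
    refine ⟨y / U, ⟨div_nonneg hy0 hU.le, ?_⟩, hy0, hty, ?_, ?_⟩
    · rw [div_le_one hU]; nlinarith
    · rw [show t - L * (1 - y / U) = (U * t - L * U + L * y) / U by field_simp; ring,
        le_div_iff₀ hU]
      nlinarith
    · rw [mul_div_cancel₀ y hU.ne']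
end
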